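/- Let Ω ⊆ ℝ^d be a bounded open set, p ≥ 1, μ, ν Borel probability measures on Ω, and f, g bounded Borel measurable functions Ω → ℝ^m with f ∈ L^p(μ), g ∈ L^p(ν). Then lim_{λ→∞} d_{TL^p_λ}((f,μ),(g,ν)) = d_{OT}(f_#μ, g_#ν), where d_{OT} is the optimal transport distance on probability measures on ℝ^m with cost c(u,v) = |u−v|_p^p. -/

import Mathlib

open MeasureTheory Filter
open scoped ProbabilityTheory ENNReal

noncomputable section

/-- `lpPow p x y = |x - y|_p^p = ∑ i, |x i - y i|^p`, the p-th power of the ℓ^p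
distance between `x` and `y` in Euclidean space. -/
def lpPow (p : ℝ) {n : ℕ} (x y : Fin n → ℝ) : ℝ := ∑ i, |x i - y i| ^ p

/-- `Couplings μ ν` is the set of (probability) measures on the product whose first
marginal is `μ` and second marginal is `ν`. -/
def Couplings {α β : Type*} [MeasurableSpace α] [MeasurableSpace β]
    (μ : Measure α) (ν : Measure β) : Set (Measure (α × β)) :=
  {π | π.fst = μ ∧ π.snd = ν}

/-- The p-th power of the `TL^p_λ` distance:
`inf_{π ∈ Π(μ,ν)} ∫ (1/λ)|x-y|_p^p + |f(x)-g(y)|_p^p dπ`. -/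
def TLpPow {d m : ℕ} (p lam : ℝ) (f g : (Fin d → ℝ) → (Fin m → ℝ))
    (μ ν : Measure (Fin d → ℝ)) : ℝ :=
  sInf {r : ℝ | ∃ π ∈ Couplings μ ν,
    r = ∫ z : (Fin d → ℝ) × (Fin d → ℝ),
      ((1 / lam) * lpPow p z.1 z.2 + lpPow p (f z.1) (g z.2)) ∂π}

/-- The `TL^p_λ` distance. -/
def TLpDist {d m : ℕ} (p lam : ℝ) (f g : (Fin d → ℝ) → (Fin m → ℝ))
    (μ ν : Measure (Fin d → ℝ)) : ℝ := TLpPow p lam f g μ ν ^ (1 / p)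

/-- Optimal transport cost between two measures for a cost function `c`. -/
def OTCost {α : Type*} [MeasurableSpace α] (c : α × α → ℝ) (μ ν : Measure α) : ℝ :=
  sInf {r : ℝ | ∃ π ∈ Couplings μ ν, r = ∫ z, c z ∂π}

/-! ### Auxiliary lemmas -/

lemma lpPow_nonneg (p : ℝ) {n : ℕ} (x y : Fin n → ℝ) : 0 ≤ lpPow p x y :=
  Finset.sum_nonneg fun i _ => Real.rpow_nonneg (abs_nonneg _) p

lemma measurable_lpPow {p : ℝ} (hp : 0 ≤ p) {n : ℕ} :
    Measurable fun z : (Fin n → ℝ) × (Fin n → ℝ) => lpPow p z.1 z.2 := by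
  unfold lpPow
  exact Finset.measurable_sum _ fun i _ =>
    (Real.continuous_rpow_const hp).measurable.comp
      ((((measurable_pi_apply i).comp measurable_fst).sub
        ((measurable_pi_apply i).comp measurable_snd)).abs)

lemma lpPow_le {n : ℕ} {p R : ℝ} (hp : 1 ≤ p) (hR : 0 ≤ R) {x y : Fin n → ℝ}
    (hx : ∀ i, |x i| ≤ R) (hy : ∀ i, |y i| ≤ R) :
    lpPow p x y ≤ (n : ℝ) * (2 * R) ^ p := by
  have hterm : ∀ i, |x i - y i| ^ p ≤ (2 * R) ^ p := by
    intro i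
    refine Real.rpow_le_rpow (abs_nonneg _) ?_ (le_trans zero_le_one hp)
    calc |x i - y i| ≤ |x i| + |y i| := abs_sub _ _
      _ ≤ R + R := add_le_add (hx i) (hy i)
      _ = 2 * R := by ring
  calc lpPow p x y ≤ ∑ _i : Fin n, (2 * R) ^ p :=
        Finset.sum_le_sum fun i _ => hterm i
    _ = (n : ℝ) * (2 * R) ^ p := by
        simp [Finset.sum_const, Finset.card_univ, nsmul_eq_mul]

lemma bdd_coord {m : ℕ} {s : Set (Fin m → ℝ)} (hs : Bornology.IsBounded s) :
    ∃ R : ℝ, 0 ≤ R ∧ ∀ x ∈ s, ∀ i, |x i| ≤ R := by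
  obtain ⟨R, hR⟩ := isBounded_iff_forall_norm_le.mp hs
  refine ⟨max R 0, le_max_right _ _, fun x hx i => ?_⟩
  calc |x i| = ‖x i‖ := (Real.norm_eq_abs _).symm
    _ ≤ ‖x‖ := norm_le_pi_norm x i
    _ ≤ R := hR x hx
    _ ≤ max R 0 := le_max_left _ _

/-- The gluing lemma: every coupling of the pushforward measures can be lifted to a
coupling of the original measures. -/
lemma gluing {d m : ℕ} (μ ν : Measure (Fin d → ℝ))
    [IsProbabilityMeasure μ] [IsProbabilityMeasure ν]
    (f g : (Fin d → ℝ) → (Fin m → ℝ)) (hf : Measurable f) (hg : Measurable g)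
    (γ : Measure ((Fin m → ℝ) × (Fin m → ℝ))) (hγ : γ ∈ Couplings (μ.map f) (ν.map g)) :
    ∃ π ∈ Couplings μ ν, π.map (Prod.map f g) = γ := by
  classical
  haveI : IsProbabilityMeasure (μ.map f) := Measure.isProbabilityMeasure_map hf.aemeasurable
  haveI : IsProbabilityMeasure (ν.map g) := Measure.isProbabilityMeasure_map hg.aemeasurable
  haveI : IsProbabilityMeasure γ := by
    constructor
    rw [← Set.preimage_univ (f := Prod.fst), ← Measure.fst_apply MeasurableSet.univ, hγ.1,
      measure_univ]
  -- the disintegration kernels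
  set ρf : Measure ((Fin m → ℝ) × (Fin d → ℝ)) := μ.map (fun x => (f x, x)) with hρf_def
  set ρg : Measure ((Fin m → ℝ) × (Fin d → ℝ)) := ν.map (fun x => (g x, x)) with hρg_def
  haveI : IsProbabilityMeasure ρf :=
    Measure.isProbabilityMeasure_map (hf.prodMk measurable_id').aemeasurable
  haveI : IsProbabilityMeasure ρg :=
    Measure.isProbabilityMeasure_map (hg.prodMk measurable_id').aemeasurable
  have hρffst : ρf.fst = μ.map f := by
    rw [Measure.fst, hρf_def, Measure.map_map measurable_fst (hf.prodMk measurable_id')]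
    rfl
  have hρgfst : ρg.fst = ν.map g := by
    rw [Measure.fst, hρg_def, Measure.map_map measurable_fst (hg.prodMk measurable_id')]
    rfl
  set κf := ρf.condKernel with hκf_def
  set κg := ρg.condKernel with hκg_def
  have hdisf : (μ.map f) ⊗ₘ κf = ρf := by rw [← hρffst]; exact ρf.disintegrate _
  have hdisg : (ν.map g) ⊗ₘ κg = ρg := by rw [← hρgfst]; exact ρg.disintegrate _
  -- the glued kernel and measure
  set κ : ProbabilityTheory.Kernel ((Fin m → ℝ) × (Fin m → ℝ)) ((Fin d → ℝ) × (Fin d → ℝ)) :=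
    (κf.comap Prod.fst measurable_fst) ×ₖ (κg.comap Prod.snd measurable_snd) with hκ_def
  have hκ_apply : ∀ z : (Fin m → ℝ) × (Fin m → ℝ), κ z = (κf z.1).prod (κg z.2) := by
    intro z
    rw [hκ_def, ProbabilityTheory.Kernel.prod_apply, ProbabilityTheory.Kernel.comap_apply,
      ProbabilityTheory.Kernel.comap_apply]
  set π : Measure ((Fin d → ℝ) × (Fin d → ℝ)) := (γ ⊗ₘ κ).snd with hπ_def
  have hπ_apply : ∀ A : Set ((Fin d → ℝ) × (Fin d → ℝ)), MeasurableSet A → π A = ∫⁻ z, κ z A ∂γ := by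
    intro A hA
    rw [hπ_def, Measure.snd_apply hA, Measure.compProd_apply (measurable_snd hA)]
    rfl
  -- a.e. concentration of the conditional kernels on fibers
  have habs : ∀ (φ : (Fin d → ℝ) → (Fin m → ℝ)) (hφ : Measurable φ) (μ' : Measure (Fin d → ℝ)) [IsProbabilityMeasure μ']
      (ρ : Measure ((Fin m → ℝ) × (Fin d → ℝ))) (hρ : μ'.map (fun x => (φ x, x)) = ρ) [IsProbabilityMeasure ρ],
      ∀ᵐ u ∂(μ'.map φ), ρ.condKernel u {x | φ x ≠ u} = 0 := by
    intro φ hφ μ' _ ρ hρ _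
    have hρfst : ρ.fst = μ'.map φ := by
      rw [← hρ, Measure.fst, Measure.map_map measurable_fst (hφ.prodMk measurable_id')]
      rfl
    have hdis : (μ'.map φ) ⊗ₘ ρ.condKernel = ρ := by rw [← hρfst]; exact ρ.disintegrate _
    have hTm : MeasurableSet {q : (Fin m → ℝ) × (Fin d → ℝ) | φ q.2 = q.1} :=
      measurableSet_eq_fun (hφ.comp measurable_snd) measurable_fst
    have hT0 : ρ ({q : (Fin m → ℝ) × (Fin d → ℝ) | φ q.2 = q.1}ᶜ) = 0 := by
      rw [← hρ, Measure.map_apply (hφ.prodMk measurable_id') hTm.compl]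
      have hemp : ((fun x => (φ x, x)) ⁻¹'
          ({q : (Fin m → ℝ) × (Fin d → ℝ) | φ q.2 = q.1}ᶜ)) = ∅ := by
        ext x; simp
      rw [hemp, measure_empty]
    rw [← hdis, Measure.compProd_apply hTm.compl] at hT0
    have hmeas : Measurable fun u =>
        ρ.condKernel u (Prod.mk u ⁻¹' ({q : (Fin m → ℝ) × (Fin d → ℝ) | φ q.2 = q.1}ᶜ)) :=
      ProbabilityTheory.Kernel.measurable_kernel_prodMk_left hTm.compl
    have := (lintegral_eq_zero_iff hmeas).mp hT0
    filter_upwards [this] with u hu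
    have hset : {x | φ x ≠ u}
        = Prod.mk u ⁻¹' ({q : (Fin m → ℝ) × (Fin d → ℝ) | φ q.2 = q.1}ᶜ) := by
      ext x; simp [Set.compl_setOf]
    rw [hset]
    exact hu
  have haef0 : ∀ᵐ u ∂(μ.map f), κf u {x | f x ≠ u} = 0 := habs f hf μ ρf rfl
  have haeg0 : ∀ᵐ u ∂(ν.map g), κg u {x | g x ≠ u} = 0 := habs g hg ν ρg rfl
  -- transfer to γ
  have htrans : ∀ (φ : (Fin d → ℝ) → (Fin m → ℝ)) (hφ : Measurable φ)
      (κ' : ProbabilityTheory.Kernel (Fin m → ℝ) (Fin d → ℝ))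
      [ProbabilityTheory.IsMarkovKernel κ']
      (pr : (Fin m → ℝ) × (Fin m → ℝ) → (Fin m → ℝ)) (hpr : Measurable pr)
      (θ : Measure (Fin m → ℝ)) (hμγ : γ.map pr = θ)
      (h0 : ∀ᵐ u ∂θ, κ' u {x | φ x ≠ u} = 0),
      ∀ᵐ z ∂γ, κ' (pr z) {x | φ x ≠ pr z} = 0 := by
    intro φ hφ κ' _ pr hpr θ hμγ h0
    have hTm : MeasurableSet ({q : (Fin m → ℝ) × (Fin d → ℝ) | φ q.2 = q.1}ᶜ) :=
      (measurableSet_eq_fun (hφ.comp measurable_snd) measurable_fst).compl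
    have hmeas : Measurable fun u =>
        κ' u (Prod.mk u ⁻¹' ({q : (Fin m → ℝ) × (Fin d → ℝ) | φ q.2 = q.1}ᶜ)) :=
      ProbabilityTheory.Kernel.measurable_kernel_prodMk_left hTm
    have hmeas' : MeasurableSet {u : (Fin m → ℝ) | κ' u {x | φ x ≠ u} = 0} := by
      have hs : {u : (Fin m → ℝ) | κ' u {x | φ x ≠ u} = 0}
          = (fun u => κ' u (Prod.mk u ⁻¹'
              ({q : (Fin m → ℝ) × (Fin d → ℝ) | φ q.2 = q.1}ᶜ))) ⁻¹' {0} := by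
        ext u
        have hpre : Prod.mk u ⁻¹' ({q : (Fin m → ℝ) × (Fin d → ℝ) | φ q.2 = q.1}ᶜ)
            = {x | φ x ≠ u} := by ext x; simp [Set.compl_setOf]
        simp [hpre, Set.compl_setOf]
      rw [hs]
      exact hmeas (measurableSet_singleton 0)
    rw [← hμγ] at h0
    exact (ae_map_iff hpr.aemeasurable hmeas').mp h0
  have haef : ∀ᵐ z ∂γ, κf z.1 {x | f x ≠ z.1} = 0 :=
    htrans f hf κf Prod.fst measurable_fst _ hγ.1 haef0
  have haeg : ∀ᵐ z ∂γ, κg z.2 {x | g x ≠ z.2} = 0 :=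
    htrans g hg κg Prod.snd measurable_snd _ hγ.2 haeg0
  -- marginals of π
  have hπfst : π.fst = μ := by
    ext s hs
    rw [Measure.fst_apply hs, hπ_apply _ (measurable_fst hs)]
    have h1 : ∀ z : (Fin m → ℝ) × (Fin m → ℝ), κ z (Prod.fst ⁻¹' s) = κf z.1 s := by
      intro z
      rw [hκ_apply z]
      have : Prod.fst ⁻¹' s = s ×ˢ (Set.univ : Set (Fin d → ℝ)) := by ext w; simp
      rw [this, Measure.prod_prod, measure_univ, mul_one]
    simp_rw [h1]
    have h2 : ∫⁻ z, κf z.1 s ∂γ = ∫⁻ u, κf u s ∂(γ.map Prod.fst) :=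
      (lintegral_map (ProbabilityTheory.Kernel.measurable_coe κf hs) measurable_fst).symm
    rw [h2]
    have h3 : γ.map Prod.fst = μ.map f := hγ.1
    rw [h3]
    have h4 : μ s = ρf (Prod.snd ⁻¹' s) := by
      rw [hρf_def, Measure.map_apply (hf.prodMk measurable_id') (measurable_snd hs)]
      rfl
    rw [h4, ← hdisf, Measure.compProd_apply (measurable_snd hs)]
    congr 1
  have hπsnd : π.snd = ν := by
    ext s hs
    rw [Measure.snd_apply hs, hπ_apply _ (measurable_snd hs)]
    have h1 : ∀ z : (Fin m → ℝ) × (Fin m → ℝ), κ z (Prod.snd ⁻¹' s) = κg z.2 s := by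
      intro z
      rw [hκ_apply z]
      have : Prod.snd ⁻¹' s = (Set.univ : Set (Fin d → ℝ)) ×ˢ s := by ext w; simp
      rw [this, Measure.prod_prod, measure_univ, one_mul]
    simp_rw [h1]
    have h2 : ∫⁻ z, κg z.2 s ∂γ = ∫⁻ u, κg u s ∂(γ.map Prod.snd) :=
      (lintegral_map (ProbabilityTheory.Kernel.measurable_coe κg hs) measurable_snd).symm
    rw [h2]
    have h3 : γ.map Prod.snd = ν.map g := hγ.2
    rw [h3]
    have h4 : ν s = ρg (Prod.snd ⁻¹' s) := by
      rw [hρg_def, Measure.map_apply (hg.prodMk measurable_id') (measurable_snd hs)]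
      rfl
    rw [h4, ← hdisg, Measure.compProd_apply (measurable_snd hs)]
    congr 1
  -- pushforward of π is γ
  have hmap : π.map (Prod.map f g) = γ := by
    ext A hA
    rw [Measure.map_apply (hf.prodMap hg) hA, hπ_apply _ ((hf.prodMap hg) hA)]
    have hae : ∀ᵐ z ∂γ, κ z (Prod.map f g ⁻¹' A)
        = A.indicator (1 : ((Fin m → ℝ) × (Fin m → ℝ)) → ℝ≥0∞) z := by
      filter_upwards [haef, haeg] with z hz1 hz2
      rw [hκ_apply z]
      set S1 : Set (Fin d → ℝ) := {x | f x = z.1} with hS1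
      set S2 : Set (Fin d → ℝ) := {x | g x = z.2} with hS2
      have hnull : ((κf z.1).prod (κg z.2)) (S1ᶜ ×ˢ Set.univ ∪ Set.univ ×ˢ S2ᶜ) = 0 := by
        refine measure_union_null ?_ ?_
        · rw [Measure.prod_prod]
          have : (κf z.1) S1ᶜ = 0 := hz1
          rw [this, zero_mul]
        · rw [Measure.prod_prod]
          have : (κg z.2) S2ᶜ = 0 := hz2
          rw [this, mul_zero]
      by_cases hzA : z ∈ A
      · rw [Set.indicator_of_mem hzA, Pi.one_apply]
        have hsub : (Prod.map f g ⁻¹' A)ᶜ ⊆ S1ᶜ ×ˢ Set.univ ∪ Set.univ ×ˢ S2ᶜ := by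
          intro w hw
          rcases eq_or_ne (f w.1) z.1 with h1 | h1
          · rcases eq_or_ne (g w.2) z.2 with h2 | h2
            · exfalso
              apply hw
              have hz : Prod.map f g w = z := by
                show (f w.1, g w.2) = z
                rw [h1, h2]
              rw [Set.mem_preimage, hz]
              exact hzA
            · exact Set.mem_union_right _ (Set.mem_prod.mpr ⟨trivial, h2⟩)
          · exact Set.mem_union_left _ (Set.mem_prod.mpr ⟨h1, trivial⟩)
        have hcompl0 : ((κf z.1).prod (κg z.2)) (Prod.map f g ⁻¹' A)ᶜ = 0 :=
          measure_mono_null hsub hnull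
        haveI : IsProbabilityMeasure ((κf z.1).prod (κg z.2)) := by infer_instance
        exact (prob_compl_eq_zero_iff ((hf.prodMap hg) hA)).mp hcompl0
      · rw [Set.indicator_of_notMem hzA]
        have hsub : Prod.map f g ⁻¹' A ⊆ S1ᶜ ×ˢ Set.univ ∪ Set.univ ×ˢ S2ᶜ := by
          intro w hw
          rcases eq_or_ne (f w.1) z.1 with h1 | h1
          · rcases eq_or_ne (g w.2) z.2 with h2 | h2
            · exfalso
              apply hzA
              have hz : Prod.map f g w = z := by
                show (f w.1, g w.2) = z
                rw [h1, h2]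
              rw [← hz]
              exact hw
            · exact Set.mem_union_right _ (Set.mem_prod.mpr ⟨trivial, h2⟩)
          · exact Set.mem_union_left _ (Set.mem_prod.mpr ⟨h1, trivial⟩)
        exact measure_mono_null hsub hnull
    rw [lintegral_congr_ae hae, lintegral_indicator_one hA]
  exact ⟨π, ⟨hπfst, hπsnd⟩, hmap⟩

set_option maxHeartbeats 1000000 in
/-- `lim_{λ→∞} d_{TL^p_λ}((f,μ),(g,ν)) = d_OT(f_#μ, g_#ν)`, the optimal transport
distance on probability measures on ℝ^m with cost `|u−v|_p^p`. -/
theorem tlp_tendsto_OT_of_lambda_to_infty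
    {d m : ℕ} (p : ℝ) (hp : 1 ≤ p)
    (Ω : Set (Fin d → ℝ)) (hΩo : IsOpen Ω) (hΩb : Bornology.IsBounded Ω)
    (μ ν : Measure (Fin d → ℝ))
    [IsProbabilityMeasure μ] [IsProbabilityMeasure ν]
    (hμ : μ Ωᶜ = 0) (hν : ν Ωᶜ = 0)
    (f g : (Fin d → ℝ) → (Fin m → ℝ))
    (hf : Measurable f) (hg : Measurable g)
    (hfb : Bornology.IsBounded (Set.range f)) (hgb : Bornology.IsBounded (Set.range g))
    (hfp : Integrable (fun x => lpPow p (f x) 0) μ)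
    (hgp : Integrable (fun x => lpPow p (g x) 0) ν) :
    Tendsto (fun lam => TLpDist p lam f g μ ν) atTop
      (nhds ((OTCost (fun w => lpPow p w.1 w.2) (μ.map f) (ν.map g)) ^ (1 / p))) := by
  classical
  have hp0 : (0:ℝ) < p := lt_of_lt_of_le one_pos hp
  have hp' : (0:ℝ) ≤ p := hp0.le
  have hppos : 0 < 1 / p := by positivity
  haveI : IsProbabilityMeasure (μ.map f) := Measure.isProbabilityMeasure_map hf.aemeasurable
  haveI : IsProbabilityMeasure (ν.map g) := Measure.isProbabilityMeasure_map hg.aemeasurable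
  obtain ⟨Rf, hRf0, hRf⟩ := bdd_coord hfb
  obtain ⟨Rg, hRg0, hRg⟩ := bdd_coord hgb
  obtain ⟨RΩ, hRΩ0, hRΩ⟩ := bdd_coord hΩb
  set R := max Rf Rg with hRdef
  have hR0 : 0 ≤ R := le_trans hRf0 (le_max_left _ _)
  set B : ℝ := (m:ℝ) * (2 * R) ^ p with hBdef
  have hBnn : 0 ≤ B := mul_nonneg (Nat.cast_nonneg _) (Real.rpow_nonneg (by linarith) _)
  have hcostB : ∀ x y : Fin d → ℝ, lpPow p (f x) (g y) ≤ B := fun x y =>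
    lpPow_le hp hR0 (fun i => le_trans (hRf (f x) (Set.mem_range_self x) i) (le_max_left _ _))
      (fun i => le_trans (hRg (g y) (Set.mem_range_self y) i) (le_max_right _ _))
  set C : ℝ := (d:ℝ) * (2 * RΩ) ^ p with hCdef
  have hCnn : 0 ≤ C := mul_nonneg (Nat.cast_nonneg _) (Real.rpow_nonneg (by linarith) _)
  have hlpC : ∀ x ∈ Ω, ∀ y ∈ Ω, lpPow p x y ≤ C := fun x hx y hy =>
    lpPow_le hp hRΩ0 (hRΩ x hx) (hRΩ y hy)
  have hcost_meas : Measurable fun z : (Fin d → ℝ) × (Fin d → ℝ) =>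
      lpPow p (f z.1) (g z.2) := (measurable_lpPow hp').comp (hf.prodMap hg)
  set OT : ℝ := OTCost (fun w => lpPow p w.1 w.2) (μ.map f) (ν.map g) with hOTdef
  have hOT_eq : OT = sInf {r : ℝ | ∃ γ ∈ Couplings (μ.map f) (ν.map g),
      r = ∫ z, lpPow p z.1 z.2 ∂γ} := rfl
  have hOTne : Set.Nonempty {r : ℝ | ∃ γ ∈ Couplings (μ.map f) (ν.map g),
      r = ∫ z, lpPow p z.1 z.2 ∂γ} :=
    ⟨_, ⟨(μ.map f).prod (ν.map g), ⟨Measure.fst_prod, Measure.snd_prod⟩, rfl⟩⟩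
  have hOTbdd : BddBelow {r : ℝ | ∃ γ ∈ Couplings (μ.map f) (ν.map g),
      r = ∫ z, lpPow p z.1 z.2 ∂γ} := by
    refine ⟨0, ?_⟩
    rintro r ⟨γ, _, rfl⟩
    exact integral_nonneg fun z => lpPow_nonneg _ _ _
  -- facts about couplings of μ and ν
  have hπfacts : ∀ π ∈ Couplings μ ν,
      IsProbabilityMeasure π ∧ (∀ᵐ z : (Fin d → ℝ) × (Fin d → ℝ) ∂π, z ∈ Ω ×ˢ Ω) := by
    intro π hπ
    refine ⟨⟨?_⟩, ?_⟩
    · rw [← Set.preimage_univ (f := Prod.fst), ← Measure.fst_apply MeasurableSet.univ, hπ.1,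
        measure_univ]
    · have h1 : π (Ωᶜ ×ˢ (Set.univ : Set (Fin d → ℝ))) = 0 := by
        have he : Ωᶜ ×ˢ (Set.univ : Set (Fin d → ℝ)) = Prod.fst ⁻¹' Ωᶜ := by ext z; simp
        rw [he, ← Measure.fst_apply hΩo.measurableSet.compl, hπ.1, hμ]
      have h2 : π ((Set.univ : Set (Fin d → ℝ)) ×ˢ Ωᶜ) = 0 := by
        have he : (Set.univ : Set (Fin d → ℝ)) ×ˢ Ωᶜ = Prod.snd ⁻¹' Ωᶜ := by ext z; simp
        rw [he, ← Measure.snd_apply hΩo.measurableSet.compl, hπ.2, hν]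
      have hsub : (Ω ×ˢ Ω)ᶜ ⊆ Ωᶜ ×ˢ Set.univ ∪ Set.univ ×ˢ Ωᶜ := by
        intro z hz
        by_cases h : z.1 ∈ Ω
        · exact Set.mem_union_right _ ⟨trivial, fun hc => hz ⟨h, hc⟩⟩
        · exact Set.mem_union_left _ ⟨h, trivial⟩
      have h0 : π ((Ω ×ˢ Ω)ᶜ) = 0 :=
        measure_mono_null hsub (measure_union_null h1 h2)
      rw [ae_iff]
      have hset : {a : (Fin d → ℝ) × (Fin d → ℝ) | ¬ a ∈ Ω ×ˢ Ω} = (Ω ×ˢ Ω)ᶜ := rfl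
      rw [hset]
      exact h0
  -- pushforward of a coupling is a coupling of the pushforwards
  have hpush : ∀ π ∈ Couplings μ ν,
      π.map (Prod.map f g) ∈ Couplings (μ.map f) (ν.map g) := by
    intro π hπ
    constructor
    · rw [Measure.fst, Measure.map_map measurable_fst (hf.prodMap hg)]
      have he : (Prod.fst ∘ Prod.map f g : (Fin d → ℝ) × (Fin d → ℝ) → Fin m → ℝ)
          = f ∘ Prod.fst := rfl
      rw [he, ← Measure.map_map hf measurable_fst]
      have : π.map Prod.fst = μ := hπ.1
      rw [this]
    · rw [Measure.snd, Measure.map_map measurable_snd (hf.prodMap hg)]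
      have he : (Prod.snd ∘ Prod.map f g : (Fin d → ℝ) × (Fin d → ℝ) → Fin m → ℝ)
          = g ∘ Prod.snd := rfl
      rw [he, ← Measure.map_map hg measurable_snd]
      have : π.map Prod.snd = ν := hπ.2
      rw [this]
  -- change of variables
  have hchange : ∀ π : Measure ((Fin d → ℝ) × (Fin d → ℝ)),
      ∫ z, lpPow p (f z.1) (g z.2) ∂π = ∫ w, lpPow p w.1 w.2 ∂(π.map (Prod.map f g)) := by
    intro π
    rw [integral_map (hf.prodMap hg).aemeasurable (measurable_lpPow hp').aestronglyMeasurable]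
    rfl
  -- integrability
  have hint_cost : ∀ (π : Measure ((Fin d → ℝ) × (Fin d → ℝ))) [IsProbabilityMeasure π],
      Integrable (fun z : (Fin d → ℝ) × (Fin d → ℝ) => lpPow p (f z.1) (g z.2)) π := by
    intro π _
    refine Integrable.mono' (integrable_const B) hcost_meas.aestronglyMeasurable
      (Filter.Eventually.of_forall fun z => ?_)
    rw [Real.norm_eq_abs, abs_of_nonneg (lpPow_nonneg _ _ _)]
    exact hcostB _ _
  have hint_lp : ∀ (π : Measure ((Fin d → ℝ) × (Fin d → ℝ))) [IsProbabilityMeasure π],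
      (∀ᵐ z : (Fin d → ℝ) × (Fin d → ℝ) ∂π, z ∈ Ω ×ˢ Ω) →
      Integrable (fun z : (Fin d → ℝ) × (Fin d → ℝ) => lpPow p z.1 z.2) π := by
    intro π _ hae
    refine Integrable.mono' (integrable_const C) (measurable_lpPow hp').aestronglyMeasurable
      (hae.mono fun z hz => ?_)
    rw [Real.norm_eq_abs, abs_of_nonneg (lpPow_nonneg _ _ _)]
    exact hlpC _ hz.1 _ hz.2
  -- lower bound
  have hlow : ∀ lam : ℝ, 1 ≤ lam → OT ≤ TLpPow p lam f g μ ν := by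
    intro lam hlam
    have hlam0 : (0:ℝ) < lam := lt_of_lt_of_le one_pos hlam
    rw [TLpPow]
    refine le_csInf ⟨_, ⟨μ.prod ν, ⟨Measure.fst_prod, Measure.snd_prod⟩, rfl⟩⟩ ?_
    rintro r ⟨π, hπ, rfl⟩
    obtain ⟨hπprob, haeΩ⟩ := hπfacts π hπ
    haveI := hπprob
    have hil := hint_lp π haeΩ
    have hic := hint_cost π
    have hsplit : ∫ z, ((1/lam) * lpPow p z.1 z.2 + lpPow p (f z.1) (g z.2)) ∂π
        = (1/lam) * ∫ z, lpPow p z.1 z.2 ∂π + ∫ z, lpPow p (f z.1) (g z.2) ∂π := by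
      rw [integral_add (hil.const_mul _) hic, integral_const_mul]
    rw [hsplit]
    have h1 : 0 ≤ (1/lam) * ∫ z, lpPow p z.1 z.2 ∂π :=
      mul_nonneg (by positivity) (integral_nonneg fun z => lpPow_nonneg _ _ _)
    have h2 : OT ≤ ∫ z, lpPow p (f z.1) (g z.2) ∂π := by
      rw [hchange π, hOT_eq]
      exact csInf_le hOTbdd ⟨π.map (Prod.map f g), hpush π hπ, rfl⟩
    linarith
  -- upper bound
  have hub : ∀ lam : ℝ, 1 ≤ lam → TLpPow p lam f g μ ν ≤ OT + C / lam := by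
    intro lam hlam
    have hlam0 : (0:ℝ) < lam := lt_of_lt_of_le one_pos hlam
    have hbddTL : BddBelow {r : ℝ | ∃ π ∈ Couplings μ ν,
        r = ∫ z : (Fin d → ℝ) × (Fin d → ℝ),
          ((1 / lam) * lpPow p z.1 z.2 + lpPow p (f z.1) (g z.2)) ∂π} := by
      refine ⟨0, ?_⟩
      rintro r ⟨π, hπ, rfl⟩
      refine integral_nonneg fun z => add_nonneg
        (mul_nonneg (by positivity) (lpPow_nonneg _ _ _)) (lpPow_nonneg _ _ _)
    have key : ∀ r ∈ {r : ℝ | ∃ γ ∈ Couplings (μ.map f) (ν.map g),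
        r = ∫ z, lpPow p z.1 z.2 ∂γ}, TLpPow p lam f g μ ν - C / lam ≤ r := by
      rintro r ⟨γ, hγ, rfl⟩
      obtain ⟨π, hπ, hmapπ⟩ := gluing μ ν f g hf hg γ hγ
      obtain ⟨hπprob, haeΩ⟩ := hπfacts π hπ
      haveI := hπprob
      have hil := hint_lp π haeΩ
      have hic := hint_cost π
      have hTL_le : TLpPow p lam f g μ ν
          ≤ ∫ z, ((1/lam) * lpPow p z.1 z.2 + lpPow p (f z.1) (g z.2)) ∂π := by
        rw [TLpPow]
        exact csInf_le hbddTL ⟨π, hπ, rfl⟩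
      have hsplit : ∫ z, ((1/lam) * lpPow p z.1 z.2 + lpPow p (f z.1) (g z.2)) ∂π
          = (1/lam) * ∫ z, lpPow p z.1 z.2 ∂π + ∫ z, lpPow p (f z.1) (g z.2) ∂π := by
        rw [integral_add (hil.const_mul _) hic, integral_const_mul]
      have hA : (1/lam) * ∫ z, lpPow p z.1 z.2 ∂π ≤ C / lam := by
        have hle : ∫ z, lpPow p z.1 z.2 ∂π ≤ C := by
          calc ∫ z, lpPow p z.1 z.2 ∂π ≤ ∫ _z, C ∂π :=
                integral_mono_ae hil (integrable_const C)
                  (haeΩ.mono fun z hz => hlpC _ hz.1 _ hz.2)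
            _ = C := by simp
        calc (1/lam) * ∫ z, lpPow p z.1 z.2 ∂π ≤ (1/lam) * C :=
              mul_le_mul_of_nonneg_left hle (by positivity)
          _ = C / lam := by ring
      have hB2 : ∫ z, lpPow p (f z.1) (g z.2) ∂π = ∫ z, lpPow p z.1 z.2 ∂γ := by
        rw [hchange π, hmapπ]
      linarith
    have hfin : TLpPow p lam f g μ ν - C / lam ≤ OT := by
      rw [hOT_eq]
      exact le_csInf hOTne key
    linarith
  -- squeeze
  have htt : Tendsto (fun lam => TLpPow p lam f g μ ν) atTop (nhds OT) := by
    have hupper : Tendsto (fun lam : ℝ => OT + C / lam) atTop (nhds OT) := by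
      have h0 : Tendsto (fun lam : ℝ => C / lam) atTop (nhds 0) :=
        Tendsto.div_atTop tendsto_const_nhds tendsto_id
      simpa using tendsto_const_nhds.add h0
    refine tendsto_of_tendsto_of_tendsto_of_le_of_le' tendsto_const_nhds hupper ?_ ?_
    · exact (eventually_ge_atTop 1).mono fun lam hlam => hlow lam hlam
    · exact (eventually_ge_atTop 1).mono fun lam hlam => hub lam hlam
  have hcont : ContinuousAt (fun x : ℝ => x ^ (1/p)) OT :=
    Real.continuousAt_rpow_const _ _ (Or.inr hppos.le)
  have hfinal := hcont.tendsto.comp htt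
  simpa [TLpDist, Function.comp_def] using hfinal
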